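/- Fix a point (x,y) ∈ ℝ^{d_x} × ℝ^{d_y} and assume: ‖∇_x f(x,y)‖ ≤ ℓ_{f,0} and ‖∇_y f(x,y)‖ ≤ ℓ_{f,0}; ∇_{yy} g(x,y) is symmetric with μ_g I ⪯ ∇_{yy} g(x,y) (μ_g > 0) and ‖∇_{yy} g(x,y)‖ ≤ ℓ_{g,1}; ‖∇_{xy} g(x,y)‖ ≤ ℓ_{g,1}; and ‖∇h(x)‖ ≤ ℓ_{h,0}. Then ‖∇̄f(x,y)‖ ≤ ℓ_{f,0}(1 + L_y), where L_y := (ℓ_{g,1} + (ℓ_{g,1} + μ_g)‖A⁺‖ ℓ_{h,0})/μ_g. -/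

import Mathlib

open Matrix
open scoped Kronecker

noncomputable section

/-- `ℝ^n` with the Euclidean inner product. -/
abbrev Euc (n : ℕ) : Type := EuclideanSpace ℝ (Fin n)

/-- Reinterpret a plain vector as an element of Euclidean space. -/
def toEuc {n : ℕ} (v : Fin n → ℝ) : Euc n := WithLp.toLp 2 v

/-- Spectral (operator) norm of a real matrix. -/
def specNorm {m n : Type*} [Fintype m] [Fintype n] [DecidableEq n]
    (M : Matrix m n ℝ) : ℝ :=
  ‖LinearMap.toContinuousLinearMap (Matrix.toEuclideanLin M)‖

/-- The four Moore–Penrose identities. -/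
def IsMoorePenrose {a b : ℕ} (A : Matrix (Fin a) (Fin b) ℝ)
    (Ap : Matrix (Fin b) (Fin a) ℝ) : Prop :=
  A * Ap * A = A ∧ Ap * A * Ap = Ap ∧ (A * Ap)ᵀ = A * Ap ∧ (Ap * A)ᵀ = Ap * A

/-- Partial gradient in the first variable. -/
def gradx {dx dy : ℕ} (f : Euc dx → Euc dy → ℝ) (x : Euc dx) (y : Euc dy) : Euc dx :=
  gradient (fun x' => f x' y) x

/-- Partial gradient in the second variable. -/
def grady {dx dy : ℕ} (f : Euc dx → Euc dy → ℝ) (x : Euc dx) (y : Euc dy) : Euc dy :=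
  gradient (fun y' => f x y') y

/-- Jacobian matrix of a vector-valued map: entry `(i, j)` is `∂φ_i/∂x_j`. -/
def jacM {n m : ℕ} (φ : Euc n → Euc m) (x : Euc n) : Matrix (Fin m) (Fin n) ℝ :=
  Matrix.of fun i j => fderiv ℝ φ x (EuclideanSpace.single j (1 : ℝ)) i

/-- `∇_{yy} g(x,y)`: entry `(i, j)` is `∂²g/∂y_i∂y_j`. -/
def hessYY {dx dy : ℕ} (g : Euc dx → Euc dy → ℝ) (x : Euc dx) (y : Euc dy) :
    Matrix (Fin dy) (Fin dy) ℝ :=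
  Matrix.of fun i j => gradient (fun y' => grady g x y' j) y i

/-- `∇_{xy} g(x,y)`: entry `(i, j)` is `∂²g/∂x_i∂y_j`. -/
def hessXY {dx dy : ℕ} (g : Euc dx → Euc dy → ℝ) (x : Euc dx) (y : Euc dy) :
    Matrix (Fin dx) (Fin dy) ℝ :=
  Matrix.of fun i j => gradient (fun x' => grady g x' y j) x i

/-- `∇_{yx} g(x,y)`: entry `(i, j)` is `∂²g/∂y_i∂x_j`. -/
def hessYX {dx dy : ℕ} (g : Euc dx → Euc dy → ℝ) (x : Euc dx) (y : Euc dy) :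
    Matrix (Fin dy) (Fin dx) ℝ :=
  Matrix.of fun i j => gradient (fun y' => gradx g x y' j) y i

/-- `∇_{xx} g(x,y)`. -/
def hessXX {dx dy : ℕ} (g : Euc dx → Euc dy → ℝ) (x : Euc dx) (y : Euc dy) :
    Matrix (Fin dx) (Fin dx) ℝ :=
  Matrix.of fun i j => gradient (fun x' => gradx g x' y j) x i

/-- The surrogate upper-level gradient `∇̄f(x,y)`. -/
def nablaBarF {dx dy my k : ℕ} (Ap : Matrix (Fin dy) (Fin my) ℝ)
    (V₂ : Matrix (Fin dy) (Fin k) ℝ) (f g : Euc dx → Euc dy → ℝ)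
    (h : Euc dx → Euc my) (x : Euc dx) (y : Euc dy) : Euc dx :=
  gradx f x y + toEuc
    ((((jacM h x)ᵀ * Apᵀ * hessYY g x y - hessXY g x y) * V₂ *
        (V₂ᵀ * hessYY g x y * V₂)⁻¹ * V₂ᵀ - (jacM h x)ᵀ * Apᵀ).mulVec (grady f x y))

/-!
Because `V₂ᵀ V₂ = 1`, the spectral norm of `V₂` is at most one and the reduced Hessian
`V₂ᵀ ∇_{yy} g V₂` still dominates `μ_g I`. A matrix `S ⪰ μ I` satisfies
`μ ‖v‖² ≤ ⟪v, S v⟫ ≤ ‖v‖ ‖S v‖`, so `‖S⁻¹‖ ≤ 1 / μ`. Submultiplicativity of the spectral norm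
then bounds the matrix multiplying `∇_y f` by `(ℓ_{g,1} + (ℓ_{g,1} + μ_g) ‖∇h‖ ‖A⁺‖) / μ_g`.
-/

open scoped Matrix.Norms.L2Operator

namespace Matrix

theorem posDef_of_posSemidef_sub_smul_one {n : Type*} [DecidableEq n] {S : Matrix n n ℝ} {μ : ℝ}
    (hμ : 0 < μ) (hS : (S - μ • 1).PosSemidef) : S.PosDef := by
  simpa using PosDef.posSemidef_add hS (PosDef.one.smul hμ)

variable {l m n : Type*} [Fintype l] [Fintype m] [Fintype n] [DecidableEq n]

theorem specNorm_eq_l2_opNorm (M : Matrix m n ℝ) : specNorm M = ‖M‖ := rfl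

theorem l2_opNorm_transpose [DecidableEq m] (M : Matrix m n ℝ) : ‖Mᵀ‖ = ‖M‖ := by
  rw [← conjTranspose_eq_transpose_of_trivial, l2_opNorm_conjTranspose]

theorem l2_opNorm_le_one_of_transpose_mul_self_eq_one {V : Matrix m n ℝ} (hV : Vᵀ * V = 1) :
    ‖V‖ ≤ 1 := by
  have hsq : ‖V‖ * ‖V‖ ≤ 1 := by
    rw [← l2_opNorm_conjTranspose_mul_self, conjTranspose_eq_transpose_of_trivial, hV]
    rcases isEmpty_or_nonempty n with hn | hn
    · simp [Subsingleton.elim (1 : Matrix n n ℝ) 0]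
    · exact (CStarRing.norm_one (E := Matrix n n ℝ)).le
  nlinarith [norm_nonneg V]

theorem mul_norm_le_norm_mulVec_of_posSemidef_sub_smul_one {S : Matrix n n ℝ} {μ : ℝ}
    (hS : (S - μ • 1).PosSemidef) (v : EuclideanSpace ℝ n) :
    μ * ‖v‖ ≤ ‖(EuclideanSpace.equiv n ℝ).symm (S *ᵥ v)‖ := by
  have hquad : μ * ‖v‖ ^ 2 ≤ ‖v‖ * ‖(EuclideanSpace.equiv n ℝ).symm (S *ᵥ v)‖ := by
    have h := hS.dotProduct_mulVec_nonneg v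
    simp only [star_trivial, sub_mulVec, dotProduct_sub, smul_mulVec, one_mulVec,
      dotProduct_smul, smul_eq_mul, sub_nonneg] at h
    calc μ * ‖v‖ ^ 2 = μ * (v ⬝ᵥ v) := by
          rw [← real_inner_self_eq_norm_sq, EuclideanSpace.inner_eq_star_dotProduct]; simp
      _ ≤ inner ℝ v ((EuclideanSpace.equiv n ℝ).symm (S *ᵥ v)) := by
          rw [EuclideanSpace.inner_eq_star_dotProduct]; simpa [dotProduct_comm] using h
      _ ≤ _ := real_inner_le_norm _ _
  rcases (norm_nonneg v).eq_or_lt with hv | hv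
  · rw [← hv, mul_zero]; exact norm_nonneg _
  · nlinarith

theorem l2_opNorm_inv_le_of_posSemidef_sub_smul_one {S : Matrix n n ℝ} {μ : ℝ} (hμ : 0 < μ)
    (hS : (S - μ • 1).PosSemidef) : ‖S⁻¹‖ ≤ μ⁻¹ := by
  have hSS : S * S⁻¹ = 1 :=
    mul_nonsing_inv S (posDef_of_posSemidef_sub_smul_one hμ hS).det_pos.ne'.isUnit
  rw [l2_opNorm_def]
  refine ContinuousLinearMap.opNorm_le_bound _ (inv_nonneg.2 hμ.le) fun v => ?_
  change ‖WithLp.toLp 2 (S⁻¹ *ᵥ v)‖ ≤ μ⁻¹ * ‖v‖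
  have h := mul_norm_le_norm_mulVec_of_posSemidef_sub_smul_one hS (WithLp.toLp 2 (S⁻¹ *ᵥ v))
  rw [inv_mul_eq_div, le_div_iff₀ hμ, mul_comm]
  simpa [mulVec_mulVec, hSS] using h

theorem posSemidef_transpose_mul_mul_sub_smul_one [DecidableEq m] {S : Matrix n n ℝ} {μ : ℝ}
    (hS : (S - μ • 1).PosSemidef) {V : Matrix n m ℝ} (hV : Vᵀ * V = 1) :
    (Vᵀ * S * V - μ • 1).PosSemidef := by
  have h := hS.conjTranspose_mul_mul_same V
  rwa [conjTranspose_eq_transpose_of_trivial, Matrix.mul_sub, Matrix.sub_mul, Matrix.mul_smul,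
    Matrix.smul_mul, Matrix.mul_one, hV] at h

theorem l2_opNorm_reducedHessian_correction_le [DecidableEq l] [DecidableEq m]
    {P G : Matrix l n ℝ} {H : Matrix n n ℝ} {V : Matrix n m ℝ} {μ ℓ : ℝ} (hμ : 0 < μ)
    (hH : (H - μ • 1).PosSemidef) (hHnorm : ‖H‖ ≤ ℓ) (hG : ‖G‖ ≤ ℓ) (hV : Vᵀ * V = 1) :
    ‖(P * H - G) * V * (Vᵀ * H * V)⁻¹ * Vᵀ - P‖ ≤ (ℓ + (ℓ + μ) * ‖P‖) / μ := by
  have hℓ : 0 ≤ ℓ := (norm_nonneg H).trans hHnorm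
  have hVnorm : ‖V‖ ≤ 1 := l2_opNorm_le_one_of_transpose_mul_self_eq_one hV
  have hVTnorm : ‖Vᵀ‖ ≤ 1 := (l2_opNorm_transpose V).trans_le hVnorm
  have hinv : ‖(Vᵀ * H * V)⁻¹‖ ≤ μ⁻¹ :=
    l2_opNorm_inv_le_of_posSemidef_sub_smul_one hμ
      (posSemidef_transpose_mul_mul_sub_smul_one hH hV)
  have hPHG : ‖P * H - G‖ ≤ ‖P‖ * ℓ + ℓ :=
    calc ‖P * H - G‖ ≤ ‖P‖ * ‖H‖ + ‖G‖ :=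
          (norm_sub_le _ _).trans (add_le_add_left (l2_opNorm_mul _ _) _)
      _ ≤ ‖P‖ * ℓ + ℓ := by gcongr
  calc ‖(P * H - G) * V * (Vᵀ * H * V)⁻¹ * Vᵀ - P‖
      ≤ ‖P * H - G‖ * ‖V‖ * ‖(Vᵀ * H * V)⁻¹‖ * ‖Vᵀ‖ + ‖P‖ := by
        refine (norm_sub_le _ _).trans (add_le_add_left ?_ _)
        refine (l2_opNorm_mul _ _).trans (mul_le_mul_of_nonneg_right ?_ (norm_nonneg _))
        refine (l2_opNorm_mul _ _).trans (mul_le_mul_of_nonneg_right ?_ (norm_nonneg _))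
        exact l2_opNorm_mul _ _
    _ ≤ (‖P‖ * ℓ + ℓ) * 1 * μ⁻¹ * 1 + ‖P‖ := by gcongr
    _ = (ℓ + (ℓ + μ) * ‖P‖) / μ := by field_simp; ring

end Matrix

theorem norm_nablaBarF_le {dx dy my k : ℕ} (Ap : Matrix (Fin dy) (Fin my) ℝ)
    (V₂ : Matrix (Fin dy) (Fin k) ℝ) (f g : Euc dx → Euc dy → ℝ) (h : Euc dx → Euc my)
    (x : Euc dx) (y : Euc dy) :
    ‖nablaBarF Ap V₂ f g h x y‖ ≤ ‖gradx f x y‖ +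
      ‖((jacM h x)ᵀ * Apᵀ * hessYY g x y - hessXY g x y) * V₂ *
        (V₂ᵀ * hessYY g x y * V₂)⁻¹ * V₂ᵀ - (jacM h x)ᵀ * Apᵀ‖ * ‖grady f x y‖ :=
  (norm_add_le _ _).trans (add_le_add_right (l2_opNorm_mulVec _ _) _)

theorem nablaBarF_bound_general
    {dx dy my k : ℕ}
    (Ap : Matrix (Fin dy) (Fin my) ℝ)
    (V₂ : Matrix (Fin dy) (Fin k) ℝ)
    (hV₂orth : V₂ᵀ * V₂ = 1)
    (f g : Euc dx → Euc dy → ℝ) (h : Euc dx → Euc my)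
    (x : Euc dx) (y : Euc dy)
    (ℓf0 μg ℓg1 ℓh0 : ℝ)
    (hfx : ‖gradx f x y‖ ≤ ℓf0) (hfy : ‖grady f x y‖ ≤ ℓf0)
    (hpsd : (hessYY g x y - μg • (1 : Matrix (Fin dy) (Fin dy) ℝ)).PosSemidef)
    (hμ : 0 < μg)
    (hHn : specNorm (hessYY g x y) ≤ ℓg1)
    (hxy : specNorm (hessXY g x y) ≤ ℓg1)
    (hjh : specNorm (jacM h x) ≤ ℓh0) :
    ‖nablaBarF Ap V₂ f g h x y‖
      ≤ ℓf0 * (1 + (ℓg1 + (ℓg1 + μg) * specNorm Ap * ℓh0) / μg) := by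
  rw [specNorm_eq_l2_opNorm] at hHn hxy hjh ⊢
  have hℓ : 0 ≤ ℓg1 := (norm_nonneg _).trans hHn
  have hP : ‖(jacM h x)ᵀ * Apᵀ‖ ≤ ‖Ap‖ * ℓh0 :=
    calc ‖(jacM h x)ᵀ * Apᵀ‖ ≤ ‖jacM h x‖ * ‖Ap‖ := by
          simpa only [l2_opNorm_transpose] using l2_opNorm_mul (jacM h x)ᵀ Apᵀ
      _ ≤ ‖Ap‖ * ℓh0 := by rw [mul_comm]; gcongr
  have hM := (l2_opNorm_reducedHessian_correction_le hμ hpsd hHn hxy hV₂orth).trans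
    (show (ℓg1 + (ℓg1 + μg) * _) / μg ≤ (ℓg1 + (ℓg1 + μg) * (‖Ap‖ * ℓh0)) / μg by gcongr)
  calc ‖nablaBarF Ap V₂ f g h x y‖
      ≤ ℓf0 + (ℓg1 + (ℓg1 + μg) * (‖Ap‖ * ℓh0)) / μg * ℓf0 :=
        (norm_nablaBarF_le Ap V₂ f g h x y).trans
          (add_le_add hfx (mul_le_mul hM hfy (norm_nonneg _) ((norm_nonneg _).trans hM)))
    _ = ℓf0 * (1 + (ℓg1 + (ℓg1 + μg) * ‖Ap‖ * ℓh0) / μg) := by ring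

/-- boundedness of the surrogate gradient `∇̄f(x,y)`. -/
theorem nablaBarF_bound
    {dx dy my k : ℕ}
    (A : Matrix (Fin my) (Fin dy) ℝ) (Ap : Matrix (Fin dy) (Fin my) ℝ)
    (hMP : IsMoorePenrose A Ap)
    (V₂ : Matrix (Fin dy) (Fin k) ℝ)
    (hV₂orth : V₂ᵀ * V₂ = 1)
    (hV₂ker : LinearMap.range V₂.mulVecLin = LinearMap.ker A.mulVecLin)
    (f g : Euc dx → Euc dy → ℝ) (h : Euc dx → Euc my)
    (x : Euc dx) (y : Euc dy)
    (ℓf0 μg ℓg1 ℓh0 : ℝ)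
    (hfx : ‖gradx f x y‖ ≤ ℓf0) (hfy : ‖grady f x y‖ ≤ ℓf0)
    (hsymm : (hessYY g x y).IsSymm)
    (hpsd : (hessYY g x y - μg • (1 : Matrix (Fin dy) (Fin dy) ℝ)).PosSemidef)
    (hμ : 0 < μg)
    (hHn : specNorm (hessYY g x y) ≤ ℓg1)
    (hxy : specNorm (hessXY g x y) ≤ ℓg1)
    (hjh : specNorm (jacM h x) ≤ ℓh0) :
    ‖nablaBarF Ap V₂ f g h x y‖
      ≤ ℓf0 * (1 + (ℓg1 + (ℓg1 + μg) * specNorm Ap * ℓh0) / μg) :=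
  nablaBarF_bound_general Ap V₂ hV₂orth f g h x y ℓf0 μg ℓg1 ℓh0 hfx hfy hpsd hμ hHn hxy hjh
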